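/- arXiv:1310.4323 — 5 statements merged into one kernel-verified Lean document; each statement's English description precedes it below -/
import Mathlib

section
/- Let (V, g, J) be an ε-Hermitian vector space and θ a 1-form with θ and θ∘J linearly independent. Suppose α = λ ⊗ θ + μ ⊗ (θ∘J) for 1-forms λ, μ, and additionally α is symmetric and of type (1,1), i.e., α(JX, JY) = -ε α(X, Y). Then λ = f θ and μ = -ε f (θ∘J) for some scalar f, so that α = f(θ ⊗ θ - ε(θ∘J) ⊗ (θ∘J)). -/
/-!
Choose vectors `y₀, y₁` dual to the independent pair `θ, θ ∘ J`. Testing the symmetry of `α`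
against `y₀` and `y₁` puts `λ` and `μ` in the span of `θ, θ ∘ J` with a symmetric coefficient
matrix: `α = a θ ⊗ θ + b (θ ⊗ θJ + θJ ⊗ θ) + c θJ ⊗ θJ`. As `θ ∘ J ∘ J = ε θ` and `ε² = 1`,
the type (1,1) condition evaluated at `(y₀, y₀)` and `(y₀, y₁)` gives `c = -ε a` and `b = 0`.
-/

namespace Module.Dual

variable {K V : Type*} [Field K] [AddCommGroup V] [Module K V]

theorem exists_apply_eq_one_apply_eq_zero {θ φ : Module.Dual K V}
    (h : LinearIndependent K ![θ, φ]) : ∃ y, θ y = 1 ∧ φ y = 0 := by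
  by_contra! hne
  have hker : ⨅ i, LinearMap.ker (![φ] i) ≤ LinearMap.ker θ := by
    intro x hx
    simp only [Submodule.mem_iInf, LinearMap.mem_ker, Fin.forall_fin_one,
      Matrix.cons_val_fin_one] at hx ⊢
    by_contra hθx
    exact hne ((θ x)⁻¹ • x) (by simp [hθx]) (by simp [hx])
  obtain ⟨c, hc⟩ :=
    Submodule.mem_span_singleton.mp (by simpa using mem_span_of_iInf_ker_le_ker hker)
  exact one_ne_zero (LinearIndependent.pair_iff.mp h 1 (-c) (by simp [← hc])).1

theorem exists_biorthogonal_of_linearIndependent_pair {θ φ : Module.Dual K V}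
    (h : LinearIndependent K ![θ, φ]) :
    ∃ y₀ y₁, θ y₀ = 1 ∧ φ y₀ = 0 ∧ θ y₁ = 0 ∧ φ y₁ = 1 := by
  obtain ⟨y₀, h₀⟩ := exists_apply_eq_one_apply_eq_zero h
  obtain ⟨y₁, h₁⟩ := exists_apply_eq_one_apply_eq_zero
    (LinearIndependent.pair_symm_iff.mp h : LinearIndependent K ![φ, θ])
  exact ⟨y₀, y₁, h₀.1, h₀.2, h₁.2, h₁.1⟩

theorem apply_eq_add_of_symmetric {θ φ l m : Module.Dual K V} {y₀ y₁ : V}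
    (h₀ : θ y₀ = 1) (h₀' : φ y₀ = 0) (h₁ : θ y₁ = 0) (h₁' : φ y₁ = 1)
    (hsymm : ∀ X Y, l X * θ Y + m X * φ Y = l Y * θ X + m Y * φ X) :
    (∀ X, l X = l y₀ * θ X + m y₀ * φ X) ∧ (∀ X, m X = m y₀ * θ X + m y₁ * φ X) := by
  have hl₁ : l y₁ = m y₀ := by simpa [h₀, h₀', h₁, h₁'] using hsymm y₁ y₀
  refine ⟨fun X => ?_, fun X => ?_⟩
  · simpa [h₀, h₀'] using hsymm X y₀
  · simpa [h₁, h₁', hl₁] using hsymm X y₁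

end Module.Dual

theorem stmt4_general (V : Type*) [AddCommGroup V] [Module ℝ V]
    (ε : ℝ) (hε : ε = 1 ∨ ε = -1)
    (J : V →ₗ[ℝ] V) (hJ2 : ∀ x : V, J (J x) = ε • x)
    (θ : V →ₗ[ℝ] ℝ)
    (hLI : ∀ a b : ℝ, (∀ x : V, a * θ x + b * θ (J x) = 0) → a = 0 ∧ b = 0)
    (lam mu : V →ₗ[ℝ] ℝ)
    (α : V → V → ℝ)
    (hα : ∀ X Y : V, α X Y = lam X * θ Y + mu X * θ (J Y))
    (hsymα : ∀ X Y : V, α X Y = α Y X)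
    (h11 : ∀ X Y : V, α (J X) (J Y) = -ε * α X Y) :
    ∃ f : ℝ, (∀ X : V, lam X = f * θ X) ∧ (∀ X : V, mu X = -ε * f * θ (J X)) ∧
      ∀ X Y : V, α X Y = f * (θ X * θ Y - ε * (θ (J X) * θ (J Y))) := by
  have hεε : ε * ε = 1 := by rcases hε with rfl | rfl <;> norm_num
  have hθJJ : ∀ X, θ (J (J X)) = ε * θ X := fun X => by rw [hJ2, map_smul, smul_eq_mul]
  have hind : LinearIndependent ℝ ![θ, θ ∘ₗ J] := LinearIndependent.pair_iff.mpr fun a b hab =>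
    hLI a b fun x => by simpa using LinearMap.congr_fun hab x
  obtain ⟨y₀, y₁, h₀, h₀', h₁, h₁'⟩ :=
    Module.Dual.exists_biorthogonal_of_linearIndependent_pair hind
  obtain ⟨hlam, hmu⟩ := Module.Dual.apply_eq_add_of_symmetric h₀ h₀' h₁ h₁'
    (l := lam) (m := mu) fun X Y => by simpa only [hα, LinearMap.comp_apply] using hsymα X Y
  simp only [LinearMap.comp_apply] at h₀' h₁' hlam hmu
  have hmu₁ : mu y₁ = -ε * lam y₀ := by
    have := h11 y₀ y₀
    simp only [hα, hlam (J y₀), hmu (J y₀), hθJJ, h₀, h₀'] at this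
    linear_combination this - mu y₁ * hεε
  have hmu₀ : mu y₀ = 0 := by
    have := h11 y₀ y₁
    simp only [hα, hlam (J y₀), hmu (J y₀), hθJJ, h₀, h₀', h₁, h₁'] at this
    linear_combination ε / 2 * this - mu y₀ * hεε
  have hlam' : ∀ X, lam X = lam y₀ * θ X := fun X => by rw [hlam X, hmu₀]; ring
  have hmu' : ∀ X, mu X = -ε * lam y₀ * θ (J X) := fun X => by rw [hmu X, hmu₀, hmu₁]; ring
  exact ⟨lam y₀, hlam', hmu', fun X Y => by rw [hα, hlam', hmu']; ring⟩

/-- If `α = λ ⊗ θ + μ ⊗ (θ∘J)` is moreover symmetric and of type (1,1)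
(`α(JX,JY) = -ε α(X,Y)`), and `θ, θ∘J` are linearly independent, then `λ = f θ` and
`μ = -ε f (θ∘J)` for some scalar `f`, so that
`α = f (θ ⊗ θ - ε (θ∘J) ⊗ (θ∘J))`. -/
theorem stmt4 (V : Type*) [AddCommGroup V] [Module ℝ V] [FiniteDimensional ℝ V]
    (ε : ℝ) (hε : ε = 1 ∨ ε = -1)
    (g : LinearMap.BilinForm ℝ V)
    (hsymm : ∀ x y : V, g x y = g y x)
    (hnd : ∀ x : V, (∀ y : V, g x y = 0) → x = 0)
    (J : V →ₗ[ℝ] V) (hJ2 : ∀ x : V, J (J x) = ε • x)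
    (hskew : ∀ x y : V, g (J x) y + g x (J y) = 0)
    (θ : V →ₗ[ℝ] ℝ)
    (hLI : ∀ a b : ℝ, (∀ x : V, a * θ x + b * θ (J x) = 0) → a = 0 ∧ b = 0)
    (lam mu : V →ₗ[ℝ] ℝ)
    (α : V → V → ℝ)
    (hα : ∀ X Y : V, α X Y = lam X * θ Y + mu X * θ (J Y))
    (hsymα : ∀ X Y : V, α X Y = α Y X)
    (h11 : ∀ X Y : V, α (J X) (J Y) = -ε * α X Y) :
    ∃ f : ℝ, (∀ X : V, lam X = f * θ X) ∧ (∀ X : V, mu X = -ε * f * θ (J X)) ∧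
      ∀ X Y : V, α X Y = f * (θ X * θ Y - ε * (θ (J X) * θ (J Y))) :=
  stmt4_general V ε hε J hJ2 θ hLI lam mu α hα hsymα h11
end

section
/- With R = k (θ ∧ (θ∘J)) ⊗ (θ ∧ (θ∘J)) as above and ξ null, the associated Ricci tensor vanishes: for any basis, the trace r(Y, W) = Σᵢ εᵢ R(eᵢ, Y, eᵢ, W) over an orthonormal basis {eᵢ} equals 0. -/
/-!
Each slice `X ↦ w(X, Y)` of the 2-form `θ ∧ (θ ∘ J)` is `g(u_Y, ·)` with `u_Y = θ(JY) ξ + θ(Y) Jξ`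
(skewness of `J` turns `θ ∘ J` into `-g(Jξ, ·)`). Contracting against an orthonormal basis then
gives `r(Y, W) = k g(u_Y, u_W)`, which vanishes because `span {ξ, Jξ}` is totally isotropic.
-/

namespace LinearMap.BilinForm

variable {R M ι : Type*} [CommRing R] [AddCommGroup M] [Module R M] [Fintype ι]

theorem apply_eq_sum_repr_mul_apply_basis (g : LinearMap.BilinForm R M) (e : Module.Basis ι R M)
    (u v : M) : g u v = ∑ i, e.repr v i * g u (e i) := by
  conv_lhs => rw [← e.sum_repr v]
  simp only [map_sum, map_smul, smul_eq_mul]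

section Orthogonal

variable [DecidableEq ι] {g : LinearMap.BilinForm R M} {e : Module.Basis ι R M} {s : ι → R}

theorem apply_basis_of_orthogonal (horth : ∀ i j, g (e i) (e j) = if i = j then s i else 0)
    (v : M) (i : ι) : g v (e i) = e.repr v i * s i := by
  conv_lhs => rw [← e.sum_repr v]
  simp only [map_sum, map_smul, LinearMap.sum_apply, LinearMap.smul_apply, horth, smul_eq_mul,
    mul_ite, mul_zero, Finset.sum_ite_eq', Finset.mem_univ, if_true]

theorem sum_mul_apply_basis_mul_apply_basis (hs : ∀ i, s i * s i = 1)
    (horth : ∀ i j, g (e i) (e j) = if i = j then s i else 0) (u v : M) :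
    ∑ i, s i * (g u (e i) * g v (e i)) = g u v := by
  rw [apply_eq_sum_repr_mul_apply_basis g e u v]
  refine Finset.sum_congr rfl fun i _ => ?_
  rw [apply_basis_of_orthogonal horth v i]
  linear_combination (g u (e i) * e.repr v i) * hs i

end Orthogonal

variable {g : LinearMap.BilinForm R M} {J : M →ₗ[R] M} {ξ : M}

theorem apply_mul_apply_comp_sub_eq_apply_smul_add_smul
    (hskew : ∀ x y, g (J x) y + g x (J y) = 0) (X Y : M) :
    g ξ X * g ξ (J Y) - g ξ Y * g ξ (J X) = g (g ξ (J Y) • ξ + g ξ Y • J ξ) X := by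
  have hJX : g ξ (J X) = -g (J ξ) X := by linear_combination hskew ξ X
  simp only [hJX, map_add, map_smul, LinearMap.add_apply, LinearMap.smul_apply, smul_eq_mul]
  ring

theorem apply_smul_add_smul_eq_zero_of_isotropic
    (hskew : ∀ x y, g (J x) y + g x (J y) = 0)
    (h1 : g ξ ξ = 0) (h2 : g (J ξ) (J ξ) = 0) (h3 : g ξ (J ξ) = 0) (a b c d : R) :
    g (a • ξ + b • J ξ) (c • ξ + d • J ξ) = 0 := by
  have h3_symm : g (J ξ) ξ = 0 := by linear_combination hskew ξ ξ - h3
  simp only [map_add, map_smul, LinearMap.add_apply, LinearMap.smul_apply, smul_eq_mul,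
    h1, h2, h3, h3_symm, mul_zero, add_zero]

end LinearMap.BilinForm

open LinearMap.BilinForm in
theorem stmt10_general (V : Type*) [AddCommGroup V] [Module ℝ V]
    (g : LinearMap.BilinForm ℝ V)
    (J : V →ₗ[ℝ] V)
    (hskew : ∀ x y : V, g (J x) y + g x (J y) = 0)
    (ξ : V) (h1 : g ξ ξ = 0) (h2 : g (J ξ) (J ξ) = 0) (h3 : g ξ (J ξ) = 0)
    (k : ℝ)
    (θ : V → ℝ) (hθ : ∀ X : V, θ X = g ξ X)
    (w : V → V → ℝ) (hw : ∀ X Y : V, w X Y = θ X * θ (J Y) - θ Y * θ (J X))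
    (R : V → V → V → V → ℝ)
    (hR : ∀ X Y Z W : V, R X Y Z W = k * w X Y * w Z W)
    (m : ℕ) (e : Module.Basis (Fin m) ℝ V) (s : Fin m → ℝ)
    (hs : ∀ i, s i = 1 ∨ s i = -1)
    (horth : ∀ i j, g (e i) (e j) = if i = j then s i else 0) :
    ∀ Y W : V, ∑ i, s i * R (e i) Y (e i) W = 0 := by
  intro Y W
  have hs2 (i : Fin m) : s i * s i = 1 := by rcases hs i with h | h <;> simp [h]
  have hw_slice (X Z : V) : w X Z = g (g ξ (J Z) • ξ + g ξ Z • J ξ) X := by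
    rw [hw, hθ, hθ, hθ, hθ, apply_mul_apply_comp_sub_eq_apply_smul_add_smul hskew]
  calc ∑ i, s i * R (e i) Y (e i) W
      = k * ∑ i, s i * (g (g ξ (J Y) • ξ + g ξ Y • J ξ) (e i) *
          g (g ξ (J W) • ξ + g ξ W • J ξ) (e i)) := by
        simp only [hR, hw_slice, Finset.mul_sum]
        exact Finset.sum_congr rfl fun i _ => by ring
    _ = 0 := by
        rw [sum_mul_apply_basis_mul_apply_basis hs2 horth,
          apply_smul_add_smul_eq_zero_of_isotropic hskew h1 h2 h3, mul_zero]

/-- With `R = k (θ ∧ (θ∘J)) ⊗ (θ ∧ (θ∘J))`, `θ = ξ♭`, `ξ` null (and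
`Jξ` null, `g(ξ,Jξ) = 0`), the Ricci contraction
`r(Y,W) = Σᵢ εᵢ R(eᵢ, Y, eᵢ, W)` over any orthonormal basis `{eᵢ}` vanishes. -/
theorem stmt10 (V : Type*) [AddCommGroup V] [Module ℝ V] [FiniteDimensional ℝ V]
    (ε : ℝ) (hε : ε = 1 ∨ ε = -1)
    (g : LinearMap.BilinForm ℝ V)
    (hsymm : ∀ x y : V, g x y = g y x)
    (hnd : ∀ x : V, (∀ y : V, g x y = 0) → x = 0)
    (J : V →ₗ[ℝ] V) (hJ2 : ∀ x : V, J (J x) = ε • x)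
    (hskew : ∀ x y : V, g (J x) y + g x (J y) = 0)
    (ξ : V) (h1 : g ξ ξ = 0) (h2 : g (J ξ) (J ξ) = 0) (h3 : g ξ (J ξ) = 0)
    (k : ℝ)
    (θ : V → ℝ) (hθ : ∀ X : V, θ X = g ξ X)
    (w : V → V → ℝ) (hw : ∀ X Y : V, w X Y = θ X * θ (J Y) - θ Y * θ (J X))
    (R : V → V → V → V → ℝ)
    (hR : ∀ X Y Z W : V, R X Y Z W = k * w X Y * w Z W)
    (m : ℕ) (e : Module.Basis (Fin m) ℝ V) (s : Fin m → ℝ)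
    (hs : ∀ i, s i = 1 ∨ s i = -1)
    (horth : ∀ i j, g (e i) (e j) = if i = j then s i else 0) :
    ∀ Y W : V, ∑ i, s i * R (e i) Y (e i) W = 0 :=
  stmt10_general V g J hskew ξ h1 h2 h3 k θ hθ w hw R hR m e s hs horth
end

section
/- The Lie algebra 𝔤 with basis {A, p₁, p₂, q₁, q₂, Xₐ, JXₐ (a=1..n)} and nonzero brackets [A,q₁]=2p₂, [A,q₂]=2εp₁, [p₁,q₁]=-p₁, [p₁,q₂]=p₂+A, [p₂,q₁]=-3p₂-A, [p₂,q₂]=-εp₁, [q₁,q₂]=2b p₂ - ½(R₀-2b)A, [q₁,Xₐ]=Xₐ, [q₁,JXₐ]=JXₐ, [q₂,Xₐ]=JXₐ, [q₂,JXₐ]=εXₐ, [Xₐ,JXₐ]=2p₂+A (for fixed constants ε=±1, b, R₀ ∈ ℝ) is a solvable Lie algebra. -/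
/-! The brackets of basis vectors all lie in `𝔫 = span {A, p₁, p₂, Xₐ, JXₐ}`, so `[𝔤, 𝔤] ⊆ 𝔫`.
Inside `𝔫` the only nonzero brackets are `[Xₐ, JXₐ] = 2p₂ + A`, so `[𝔫, 𝔫]` lies in the line
`ℝ (2p₂ + A)`, which is abelian; hence the derived series vanishes at step three. -/

namespace LieAlgebra

variable {R L : Type*} [CommRing R] [LieRing L] [LieAlgebra R L]

theorem lie_mem_of_mem_span {s t : Set L} {N : Submodule R L}
    (h : ∀ x ∈ s, ∀ y ∈ t, ⁅x, y⁆ ∈ N) {x y : L} (hx : x ∈ Submodule.span R s)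
    (hy : y ∈ Submodule.span R t) : ⁅x, y⁆ ∈ N := by
  let bracket : L →ₗ[R] L →ₗ[R] L := LieModule.toEnd R L L
  have : (Submodule.span R s).map₂ bracket (Submodule.span R t) ≤ N := by
    rw [Submodule.map₂_span_span, Submodule.span_le]
    rintro _ ⟨x, hx, y, hy, rfl⟩
    exact h x hx y hy
  exact Submodule.map₂_le.1 this x hx y hy

theorem mem_of_mem_derivedSeries_succ {k : ℕ} {S : Submodule R L}
    (h : ∀ x ∈ derivedSeries R L k, ∀ y ∈ derivedSeries R L k, ⁅x, y⁆ ∈ S) {z : L}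
    (hz : z ∈ derivedSeries R L (k + 1)) : z ∈ S := by
  rw [derivedSeries_def, derivedSeriesOfIdeal_succ, ← derivedSeries_def,
    ← LieSubmodule.mem_toSubmodule, LieSubmodule.lieIdeal_oper_eq_linear_span'] at hz
  refine Submodule.span_le.2 ?_ hz
  rintro _ ⟨x, hx, y, hy, rfl⟩
  exact h x hx y hy

theorem isSolvable_of_lie_mem_of_lie_mem {S₁ S₂ : Submodule R L}
    (h₁ : ∀ x y : L, ⁅x, y⁆ ∈ S₁) (h₂ : ∀ x ∈ S₁, ∀ y ∈ S₁, ⁅x, y⁆ ∈ S₂)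
    (h₃ : ∀ x ∈ S₂, ∀ y ∈ S₂, ⁅x, y⁆ = 0) : IsSolvable L := by
  have d₁ {z} : z ∈ derivedSeries R L 1 → z ∈ S₁ :=
    mem_of_mem_derivedSeries_succ fun x _ y _ ↦ h₁ x y
  have d₂ {z} : z ∈ derivedSeries R L 2 → z ∈ S₂ :=
    mem_of_mem_derivedSeries_succ fun x hx y hy ↦ h₂ x (d₁ hx) y (d₁ hy)
  have d₃ {z} : z ∈ derivedSeries R L 3 → z ∈ (⊥ : Submodule R L) :=
    mem_of_mem_derivedSeries_succ fun x hx y hy ↦ (h₃ x (d₂ hx) y (d₂ hy)).symm ▸ zero_mem _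
  exact IsSolvable.mk (k := 3) (R := R) ((LieSubmodule.eq_bot_iff _).2 fun z hz ↦ d₃ hz)

theorem lie_mem_of_mem_pair {x y : L} {N : Submodule R L} (h : ⁅x, y⁆ ∈ N) :
    ∀ u ∈ ({x, y} : Set L), ∀ v ∈ ({x, y} : Set L), ⁅u, v⁆ ∈ N := by
  have h' : ⁅y, x⁆ ∈ N := by rw [← lie_skew]; exact neg_mem h
  simp [or_imp, forall_and, h, h']

theorem lie_mem_of_lie_mem_union {s t : Set L} {N : Submodule R L}
    (hss : ∀ x ∈ s, ∀ y ∈ s, ⁅x, y⁆ ∈ N) (hst : ∀ x ∈ s, ∀ y ∈ t, ⁅x, y⁆ ∈ N)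
    (htt : ∀ x ∈ t, ∀ y ∈ t, ⁅x, y⁆ ∈ N) : ∀ x ∈ s ∪ t, ∀ y ∈ s ∪ t, ⁅x, y⁆ ∈ N := by
  rintro x (hx | hx) y (hy | hy)
  · exact hss x hx y hy
  · exact hst x hx y hy
  · rw [← lie_skew]; exact neg_mem (hst y hy x hx)
  · exact htt x hx y hy

end LieAlgebra

open LieAlgebra Submodule

section
variable {L ι : Type*}

def derivedGens (A p₁ p₂ : L) (X Y : ι → L) : Set L :=
  {A, p₁, p₂} ∪ (Set.range X ∪ Set.range Y)

theorem forall_mem_derivedGens {A p₁ p₂ : L} {X Y : ι → L} {P : L → Prop} :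
    (∀ v ∈ derivedGens A p₁ p₂ X Y, P v) ↔
      P A ∧ P p₁ ∧ P p₂ ∧ (∀ a, P (X a)) ∧ ∀ a, P (Y a) := by
  simp [derivedGens, or_imp, forall_and, and_assoc]

variable {R : Type*} [CommRing R] [LieRing L] [LieAlgebra R L]

theorem lie_mem_span_singleton_of_mem_derivedGens {A p₁ p₂ w : L} {X Y : ι → L}
    (hAp₁ : ⁅A, p₁⁆ = 0) (hAp₂ : ⁅A, p₂⁆ = 0)
    (hAX : ∀ a, ⁅A, X a⁆ = 0) (hAY : ∀ a, ⁅A, Y a⁆ = 0)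
    (hp₁p₂ : ⁅p₁, p₂⁆ = 0)
    (hp₁X : ∀ a, ⁅p₁, X a⁆ = 0) (hp₁Y : ∀ a, ⁅p₁, Y a⁆ = 0)
    (hp₂X : ∀ a, ⁅p₂, X a⁆ = 0) (hp₂Y : ∀ a, ⁅p₂, Y a⁆ = 0)
    (hXX : ∀ a c, ⁅X a, X c⁆ = 0) (hYY : ∀ a c, ⁅Y a, Y c⁆ = 0)
    (hXY : ∀ a c, a ≠ c → ⁅X a, Y c⁆ = 0) (hXYw : ∀ a, ⁅X a, Y a⁆ = w) :
    ∀ u ∈ derivedGens A p₁ p₂ X Y, ∀ v ∈ derivedGens A p₁ p₂ X Y, ⁅u, v⁆ ∈ span R {w} := by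
  apply lie_mem_of_lie_mem_union
  · simp [or_imp, forall_and, hAp₁, hAp₂, hp₁p₂,
      ← lie_skew p₁ A, ← lie_skew p₂ A, ← lie_skew p₂ p₁]
  · simp [or_imp, forall_and, hAX, hAY, hp₁X, hp₁Y, hp₂X, hp₂Y]
  · apply lie_mem_of_lie_mem_union <;> rintro _ ⟨a, rfl⟩ _ ⟨c, rfl⟩
    · simp [hXX]
    · rcases eq_or_ne a c with rfl | hac
      · rw [hXYw]; exact mem_span_singleton_self w
      · simp [hXY a c hac]
    · simp [hYY]

theorem lie_q₁_mem_span_derivedGens {A p₁ p₂ q₁ : L} {X Y : ι → L}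
    (hAq₁ : ⁅A, q₁⁆ = (2 : R) • p₂) (hp₁q₁ : ⁅p₁, q₁⁆ = -p₁)
    (hp₂q₁ : ⁅p₂, q₁⁆ = -((3 : R) • p₂) - A)
    (hq₁X : ∀ a, ⁅q₁, X a⁆ = X a) (hq₁Y : ∀ a, ⁅q₁, Y a⁆ = Y a) :
    ∀ v ∈ derivedGens A p₁ p₂ X Y, ⁅q₁, v⁆ ∈ span R (derivedGens A p₁ p₂ X Y) := by
  obtain ⟨mA, mp₁, mp₂, mX, mY⟩ := forall_mem_derivedGens.1
    fun v (hv : v ∈ derivedGens A p₁ p₂ X Y) ↦ subset_span (R := R) hv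
  rw [forall_mem_derivedGens]
  refine ⟨?_, ?_, ?_, fun a ↦ ?_, fun a ↦ ?_⟩
  · rw [← lie_skew, hAq₁]; exact neg_mem (smul_mem _ _ mp₂)
  · rw [← lie_skew, hp₁q₁, neg_neg]; exact mp₁
  · rw [← lie_skew, hp₂q₁]; exact neg_mem (sub_mem (neg_mem (smul_mem _ _ mp₂)) mA)
  · rw [hq₁X]; exact mX a
  · rw [hq₁Y]; exact mY a

theorem lie_q₂_mem_span_derivedGens {A p₁ p₂ q₂ : L} {X Y : ι → L} {ε : R}
    (hAq₂ : ⁅A, q₂⁆ = (2 * ε) • p₁) (hp₁q₂ : ⁅p₁, q₂⁆ = p₂ + A)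
    (hp₂q₂ : ⁅p₂, q₂⁆ = -(ε • p₁))
    (hq₂X : ∀ a, ⁅q₂, X a⁆ = Y a) (hq₂Y : ∀ a, ⁅q₂, Y a⁆ = ε • X a) :
    ∀ v ∈ derivedGens A p₁ p₂ X Y, ⁅q₂, v⁆ ∈ span R (derivedGens A p₁ p₂ X Y) := by
  obtain ⟨mA, mp₁, mp₂, mX, mY⟩ := forall_mem_derivedGens.1
    fun v (hv : v ∈ derivedGens A p₁ p₂ X Y) ↦ subset_span (R := R) hv
  rw [forall_mem_derivedGens]
  refine ⟨?_, ?_, ?_, fun a ↦ ?_, fun a ↦ ?_⟩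
  · rw [← lie_skew, hAq₂]; exact neg_mem (smul_mem _ _ mp₁)
  · rw [← lie_skew, hp₁q₂]; exact neg_mem (add_mem mp₂ mA)
  · rw [← lie_skew, hp₂q₂, neg_neg]; exact smul_mem _ _ mp₁
  · rw [hq₂X]; exact mY a
  · rw [hq₂Y]; exact smul_mem _ _ (mX a)

theorem span_pair_union_derivedGens_eq_top {A p₁ p₂ q₁ q₂ : L} {X Y : ι → L}
    (B : Module.Basis (Fin 5 ⊕ ι × Fin 2) R L)
    (hA : A = B (Sum.inl 0)) (hp₁ : p₁ = B (Sum.inl 1)) (hp₂ : p₂ = B (Sum.inl 2))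
    (hq₁ : q₁ = B (Sum.inl 3)) (hq₂ : q₂ = B (Sum.inl 4))
    (hX : ∀ a, X a = B (Sum.inr (a, 0))) (hY : ∀ a, Y a = B (Sum.inr (a, 1))) :
    span R ({q₁, q₂} ∪ derivedGens A p₁ p₂ X Y) = ⊤ := by
  rw [eq_top_iff, ← B.span_eq]
  refine span_mono ?_
  rintro _ ⟨i | ⟨a, k⟩, rfl⟩
  · fin_cases i <;> simp [derivedGens, ← hA, ← hp₁, ← hp₂, ← hq₁, ← hq₂]
  · fin_cases k <;> simp [derivedGens, ← hX, ← hY]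

end

theorem stmt11_general (n : ℕ) (ε b R₀ : ℝ)
    (L : Type*) [LieRing L] [LieAlgebra ℝ L]
    (B : Module.Basis (Fin 5 ⊕ Fin n × Fin 2) ℝ L)
    (A p1 p2 q1 q2 : L) (X Y : Fin n → L)
    (hA : A = B (Sum.inl 0)) (hp1 : p1 = B (Sum.inl 1)) (hp2 : p2 = B (Sum.inl 2))
    (hq1 : q1 = B (Sum.inl 3)) (hq2 : q2 = B (Sum.inl 4))
    (hX : ∀ a, X a = B (Sum.inr (a, 0))) (hY : ∀ a, Y a = B (Sum.inr (a, 1)))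
    (h1 : ⁅A, q1⁆ = (2 : ℝ) • p2)
    (h2 : ⁅A, q2⁆ = (2 * ε) • p1)
    (h3 : ⁅p1, q1⁆ = -p1)
    (h4 : ⁅p1, q2⁆ = p2 + A)
    (h5 : ⁅p2, q1⁆ = -((3 : ℝ) • p2) - A)
    (h6 : ⁅p2, q2⁆ = -(ε • p1))
    (h7 : ⁅q1, q2⁆ = (2 * b) • p2 - ((R₀ - 2 * b) / 2) • A)
    (h8 : ∀ a, ⁅q1, X a⁆ = X a)
    (h9 : ∀ a, ⁅q1, Y a⁆ = Y a)
    (h10 : ∀ a, ⁅q2, X a⁆ = Y a)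
    (h11 : ∀ a, ⁅q2, Y a⁆ = ε • X a)
    (h12 : ∀ a, ⁅X a, Y a⁆ = (2 : ℝ) • p2 + A)
    (hz1 : ⁅A, p1⁆ = 0) (hz2 : ⁅A, p2⁆ = 0)
    (hz3 : ∀ a, ⁅A, X a⁆ = 0) (hz4 : ∀ a, ⁅A, Y a⁆ = 0)
    (hz5 : ⁅p1, p2⁆ = 0)
    (hz6 : ∀ a, ⁅p1, X a⁆ = 0) (hz7 : ∀ a, ⁅p1, Y a⁆ = 0)
    (hz8 : ∀ a, ⁅p2, X a⁆ = 0) (hz9 : ∀ a, ⁅p2, Y a⁆ = 0)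
    (hz10 : ∀ a c, ⁅X a, X c⁆ = 0)
    (hz11 : ∀ a c, ⁅Y a, Y c⁆ = 0)
    (hz12 : ∀ a c, a ≠ c → ⁅X a, Y c⁆ = 0) :
    LieAlgebra.IsSolvable L := by
  set G := derivedGens A p1 p2 X Y
  have hG := lie_mem_span_singleton_of_mem_derivedGens (R := ℝ)
    hz1 hz2 hz3 hz4 hz5 hz6 hz7 hz8 hz9 hz10 hz11 hz12 h12
  have hspan := span_pair_union_derivedGens_eq_top B hA hp1 hp2 hq1 hq2 hX hY
  obtain ⟨mA, -, mp2, -⟩ :=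
    forall_mem_derivedGens.1 fun v hv ↦ subset_span (R := ℝ) (s := G) hv
  refine isSolvable_of_lie_mem_of_lie_mem (S₁ := span ℝ G) (S₂ := span ℝ {(2 : ℝ) • p2 + A})
    (fun x y ↦ ?_) (fun x hx y hy ↦ lie_mem_of_mem_span hG hx hy) (fun x hx y hy ↦ ?_)
  · refine lie_mem_of_mem_span (lie_mem_of_lie_mem_union ?_ ?_ ?_)
      (hspan ▸ mem_top) (hspan ▸ mem_top)
    · exact lie_mem_of_mem_pair (h7 ▸ sub_mem (smul_mem _ _ mp2) (smul_mem _ _ mA))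
    · simp only [Set.mem_insert_iff, Set.mem_singleton_iff, forall_eq_or_imp, forall_eq]
      exact ⟨lie_q₁_mem_span_derivedGens h1 h3 h5 h8 h9,
        lie_q₂_mem_span_derivedGens h2 h4 h6 h10 h11⟩
    · exact fun u hu v hv ↦ span_le.2 (Set.singleton_subset_iff.2
        (add_mem (smul_mem _ _ mp2) mA)) (hG u hu v hv)
  · refine (mem_bot ℝ).1 (lie_mem_of_mem_span ?_ hx hy)
    simp only [Set.mem_singleton_iff, forall_eq, lie_self, zero_mem]

/-- The real Lie algebra `𝔤` with basis
`{A, p₁, p₂, q₁, q₂, Xₐ, JXₐ (a = 1..n)}` and the listed nonzero brackets (all other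
brackets of basis elements being zero) is solvable.
Here `A = B (inl 0)`, `p₁ = B (inl 1)`, `p₂ = B (inl 2)`, `q₁ = B (inl 3)`,
`q₂ = B (inl 4)`, `Xₐ = B (inr (a,0))`, `JXₐ = B (inr (a,1))`. -/
theorem stmt11 (n : ℕ) (ε b R₀ : ℝ) (hε : ε = 1 ∨ ε = -1)
    (L : Type*) [LieRing L] [LieAlgebra ℝ L]
    (B : Module.Basis (Fin 5 ⊕ Fin n × Fin 2) ℝ L)
    (A p1 p2 q1 q2 : L) (X Y : Fin n → L)
    (hA : A = B (Sum.inl 0)) (hp1 : p1 = B (Sum.inl 1)) (hp2 : p2 = B (Sum.inl 2))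
    (hq1 : q1 = B (Sum.inl 3)) (hq2 : q2 = B (Sum.inl 4))
    (hX : ∀ a, X a = B (Sum.inr (a, 0))) (hY : ∀ a, Y a = B (Sum.inr (a, 1)))
    (h1 : ⁅A, q1⁆ = (2 : ℝ) • p2)
    (h2 : ⁅A, q2⁆ = (2 * ε) • p1)
    (h3 : ⁅p1, q1⁆ = -p1)
    (h4 : ⁅p1, q2⁆ = p2 + A)
    (h5 : ⁅p2, q1⁆ = -((3 : ℝ) • p2) - A)
    (h6 : ⁅p2, q2⁆ = -(ε • p1))
    (h7 : ⁅q1, q2⁆ = (2 * b) • p2 - ((R₀ - 2 * b) / 2) • A)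
    (h8 : ∀ a, ⁅q1, X a⁆ = X a)
    (h9 : ∀ a, ⁅q1, Y a⁆ = Y a)
    (h10 : ∀ a, ⁅q2, X a⁆ = Y a)
    (h11 : ∀ a, ⁅q2, Y a⁆ = ε • X a)
    (h12 : ∀ a, ⁅X a, Y a⁆ = (2 : ℝ) • p2 + A)
    (hz1 : ⁅A, p1⁆ = 0) (hz2 : ⁅A, p2⁆ = 0)
    (hz3 : ∀ a, ⁅A, X a⁆ = 0) (hz4 : ∀ a, ⁅A, Y a⁆ = 0)
    (hz5 : ⁅p1, p2⁆ = 0)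
    (hz6 : ∀ a, ⁅p1, X a⁆ = 0) (hz7 : ∀ a, ⁅p1, Y a⁆ = 0)
    (hz8 : ∀ a, ⁅p2, X a⁆ = 0) (hz9 : ∀ a, ⁅p2, Y a⁆ = 0)
    (hz10 : ∀ a c, ⁅X a, X c⁆ = 0)
    (hz11 : ∀ a c, ⁅Y a, Y c⁆ = 0)
    (hz12 : ∀ a c, a ≠ c → ⁅X a, Y c⁆ = 0) :
    LieAlgebra.IsSolvable L :=
  stmt11_general n ε b R₀ L B A p1 p2 q1 q2 X Y hA hp1 hp2 hq1 hq2 hX hY h1 h2 h3 h4 h5 h6 h7 h8 h9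
    h10 h11 h12 hz1 hz2 hz3 hz4 hz5 hz6 hz7 hz8 hz9 hz10 hz11 hz12
end

section
/- A traceless algebraic curvature tensor R on an ε-Hermitian vector space satisfying both θ ∧ R_{WU} = 0 and (θ∘J) ∧ R_{WU} = 0 for all W, U (where R_{WU} is the 2-form (X,Y) ↦ R(X,Y,W,U) and θ = ξ♭ with ξ null and θ, θ∘J linearly independent) must be of the form R = k (θ ∧ (θ∘J)) ⊗ (θ ∧ (θ∘J)) for some k ∈ ℝ, provided R additionally satisfies the Kähler symmetry R(JX, JY, Z, W) = -ε R(X, Y, Z, W). -/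
/-!
Pick `u, v` with `θ u = 1`, `θ v = 0`, `(θ∘J) v = 1` (possible since `θ, θ∘J` are linearly
independent). Contracting `θ ∧ ω = 0` with `u` gives `ω = θ ∧ ω(u, ·)`, and contracting
`(θ∘J) ∧ ω = 0` with `v` then forces `ω = ω(u, v) · θ ∧ (θ∘J)`. Applied to every 2-form
`R(·, ·, W, U)`, and once more to the second pair via pair symmetry, this gives
`R = R(u, v, u, v) · (θ ∧ (θ∘J)) ⊗ (θ ∧ (θ∘J))`.
-/

section

variable {K V : Type*}

/-- `θ ∧ ω = 0` for a 1-form `θ` and a 2-form `ω`, written out on three vectors. -/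
def WedgeEqZero [CommRing K] (θ : V → K) (ω : V → V → K) : Prop :=
  ∀ X Y Z, θ X * ω Y Z - θ Y * ω X Z + θ Z * ω X Y = 0

namespace WedgeEqZero

variable [CommRing K] {θ φ : V → K} {ω : V → V → K}

theorem eq_sub_of_apply_eq_one (h : WedgeEqZero θ ω) {u : V} (hu : θ u = 1) (Y Z : V) :
    ω Y Z = θ Y * ω u Z - θ Z * ω u Y := by
  have := h u Y Z
  rw [hu] at this
  linear_combination this

theorem eq_mul_wedge (hθ : WedgeEqZero θ ω) (hφ : WedgeEqZero φ ω) {u v : V}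
    (hθu : θ u = 1) (hθv : θ v = 0) (hφv : φ v = 1) (Y Z : V) :
    ω Y Z = ω u v * (θ Y * φ Z - θ Z * φ Y) := by
  have hv : ∀ X, ω v X = -θ X * ω u v := fun X => by
    rw [hθ.eq_sub_of_apply_eq_one hθu, hθv]; ring
  rw [hφ.eq_sub_of_apply_eq_one hφv, hv, hv]
  ring

end WedgeEqZero

variable [Field K] [AddCommGroup V] [Module K V]

theorem exists_apply_mul_apply_sub_ne_zero {θ φ : V →ₗ[K] K} (h : LinearIndependent K ![θ, φ]) :
    ∃ x y, θ x * φ y - θ y * φ x ≠ 0 := by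
  by_contra! hdet
  have hx : ∀ x, φ x = 0 ∧ -θ x = 0 := fun x =>
    LinearIndependent.pair_iff.1 h (φ x) (-θ x) <| LinearMap.ext fun y => by
      simp only [LinearMap.add_apply, LinearMap.smul_apply, smul_eq_mul, LinearMap.zero_apply]
      linear_combination -hdet x y
  exact h.ne_zero 0 (LinearMap.ext fun x => by simpa using (hx x).2)

theorem exists_dual_pair {θ φ : V →ₗ[K] K} (h : LinearIndependent K ![θ, φ]) :
    ∃ u v, θ u = 1 ∧ φ u = 0 ∧ θ v = 0 ∧ φ v = 1 := by
  obtain ⟨x, y, hD⟩ := exists_apply_mul_apply_sub_ne_zero h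
  refine ⟨(θ x * φ y - θ y * φ x)⁻¹ • (φ y • x - φ x • y),
    (θ x * φ y - θ y * φ x)⁻¹ • (θ x • y - θ y • x), ?_, ?_, ?_, ?_⟩ <;>
    simp only [map_smul, map_sub, smul_eq_mul] <;> field_simp <;> ring

theorem eq_mul_wedge_mul_wedge_of_wedgeEqZero {θ φ : V →ₗ[K] K}
    (h : LinearIndependent K ![θ, φ]) {R : V → V → V → V → K}
    (hpair : ∀ X Y Z W, R X Y Z W = R Z W X Y)
    (hθ : ∀ W U, WedgeEqZero θ fun X Y => R X Y W U)
    (hφ : ∀ W U, WedgeEqZero φ fun X Y => R X Y W U) :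
    ∃ k : K, ∀ X Y Z W, R X Y Z W = k * (θ X * φ Y - θ Y * φ X) * (θ Z * φ W - θ W * φ Z) := by
  obtain ⟨u, v, hθu, -, hθv, hφv⟩ := exists_dual_pair h
  have hslice : ∀ X Y W U, R X Y W U = R u v W U * (θ X * φ Y - θ Y * φ X) :=
    fun X Y W U => (hθ W U).eq_mul_wedge (hφ W U) hθu hθv hφv X Y
  refine ⟨R u v u v, fun X Y Z W => ?_⟩
  rw [hslice, hpair, hslice Z W]
  ring

end

theorem stmt16_general (V : Type*) [AddCommGroup V] [Module ℝ V]
    (g : LinearMap.BilinForm ℝ V)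
    (J : V →ₗ[ℝ] V)
    (ξ : V)
    (hLI : ∀ a b : ℝ, (∀ x : V, a * g ξ x + b * g ξ (J x) = 0) → a = 0 ∧ b = 0)
    (R : V →ₗ[ℝ] V →ₗ[ℝ] V →ₗ[ℝ] V →ₗ[ℝ] ℝ)
    (hpair : ∀ X Y Z W : V, R X Y Z W = R Z W X Y)
    (hwedgeθ : ∀ W U X Y Z : V,
      g ξ X * R Y Z W U - g ξ Y * R X Z W U + g ξ Z * R X Y W U = 0)
    (hwedgeθJ : ∀ W U X Y Z : V,
      g ξ (J X) * R Y Z W U - g ξ (J Y) * R X Z W U + g ξ (J Z) * R X Y W U = 0) :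
    ∃ k : ℝ, ∀ X Y Z W : V,
      R X Y Z W = k * (g ξ X * g ξ (J Y) - g ξ Y * g ξ (J X))
        * (g ξ Z * g ξ (J W) - g ξ W * g ξ (J Z)) := by
  have hindep : LinearIndependent ℝ ![g ξ, g ξ ∘ₗ J] :=
    LinearIndependent.pair_iff.2 fun a b hab =>
      hLI a b fun x => by simpa using LinearMap.congr_fun hab x
  exact eq_mul_wedge_mul_wedge_of_wedgeEqZero hindep (R := fun X Y Z W => R X Y Z W) hpair
    (fun W U => hwedgeθ W U) (fun W U => hwedgeθJ W U)

/-- A traceless algebraic curvature tensor `R` on an ε-Hermitian vector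
space with the Kähler symmetry `R(JX,JY,Z,W) = -ε R(X,Y,Z,W)`, satisfying
`θ ∧ R_{WU} = 0` and `(θ∘J) ∧ R_{WU} = 0` for all `W, U` (with `θ = ξ♭`, `ξ` null,
`θ, θ∘J` linearly independent), must be of the form
`R = k (θ ∧ (θ∘J)) ⊗ (θ ∧ (θ∘J))` for some `k ∈ ℝ`. -/
theorem stmt16 (V : Type*) [AddCommGroup V] [Module ℝ V] [FiniteDimensional ℝ V]
    (ε : ℝ) (hε : ε = 1 ∨ ε = -1)
    (g : LinearMap.BilinForm ℝ V)
    (hsymm : ∀ x y : V, g x y = g y x)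
    (hnd : ∀ x : V, (∀ y : V, g x y = 0) → x = 0)
    (J : V →ₗ[ℝ] V) (hJ2 : ∀ x : V, J (J x) = ε • x)
    (hskew : ∀ x y : V, g (J x) y + g x (J y) = 0)
    (ξ : V) (hnull : g ξ ξ = 0)
    (hLI : ∀ a b : ℝ, (∀ x : V, a * g ξ x + b * g ξ (J x) = 0) → a = 0 ∧ b = 0)
    (R : V →ₗ[ℝ] V →ₗ[ℝ] V →ₗ[ℝ] V →ₗ[ℝ] ℝ)
    (hanti1 : ∀ X Y Z W : V, R X Y Z W = -R Y X Z W)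
    (hanti2 : ∀ X Y Z W : V, R X Y Z W = -R X Y W Z)
    (hpair : ∀ X Y Z W : V, R X Y Z W = R Z W X Y)
    (hbianchi : ∀ X Y Z W : V, R X Y Z W + R Y Z X W + R Z X Y W = 0)
    (hkahler : ∀ X Y Z W : V, R (J X) (J Y) Z W = -ε * R X Y Z W)
    (m : ℕ) (e : Module.Basis (Fin m) ℝ V) (s : Fin m → ℝ)
    (hs : ∀ i, s i = 1 ∨ s i = -1)
    (horth : ∀ i j, g (e i) (e j) = if i = j then s i else 0)
    (htraceless : ∀ Y W : V, ∑ i, s i * R (e i) Y (e i) W = 0)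
    (hwedgeθ : ∀ W U X Y Z : V,
      g ξ X * R Y Z W U - g ξ Y * R X Z W U + g ξ Z * R X Y W U = 0)
    (hwedgeθJ : ∀ W U X Y Z : V,
      g ξ (J X) * R Y Z W U - g ξ (J Y) * R X Z W U + g ξ (J Z) * R X Y W U = 0) :
    ∃ k : ℝ, ∀ X Y Z W : V,
      R X Y Z W = k * (g ξ X * g ξ (J Y) - g ξ Y * g ξ (J X))
        * (g ξ Z * g ξ (J W) - g ξ W * g ξ (J Z)) :=
  stmt16_general V g J ξ hLI R hpair hwedgeθ hwedgeθJ
end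

section
/- If an algebraic curvature tensor R on a tangent space satisfies R = ν R₀ where R₀ is the quaternionic space-form curvature tensor (22), and additionally R(X, Y)ξ ∈ span{ξ, J₁ξ, J₂ξ, J₃ξ} for all X, Y, where ξ is a nonzero null vector, then ν = 0 (hence R = 0). -/
/-!
Put `H = span{ξ, J₁ξ, J₂ξ, J₃ξ}`. As `ξ` is null, `H` is totally isotropic, and for `ν ≠ 0` the
hypothesis says `R₀(X, Y, ξ, W) = 0` whenever `W ⊥ H`. For `X, W ⊥ H` this forces `g(X, W) = 0`,
so `H⊥` is totally isotropic, `dim H ≥ dim V / 2 ≥ 4`, and `ξ, J₁ξ, J₂ξ, J₃ξ` are linearly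
independent. For `W = J₁ξ` it makes `g(J₁Y, ξ) ξ + g(Y, ξ) J₁ξ + ε g(J₃Y, ξ) J₂ξ - ε g(J₂Y, ξ) J₃ξ`
vanish, so `g(·, ξ) = 0` and `ξ = 0`.
-/

open Module

namespace LinearMap.BilinForm

theorem mem_orthogonal_span_iff {R M : Type*} [CommRing R] [AddCommGroup M] [Module R M]
    {B : LinearMap.BilinForm R M} {s : Set M} {m : M} :
    m ∈ B.orthogonal (Submodule.span R s) ↔ ∀ u ∈ s, B u m = 0 :=
  ⟨fun h u hu => h u (Submodule.subset_span hu),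
    fun h _ hn => Submodule.span_le (p := LinearMap.ker (B.flip m)).2 h hn⟩

theorem finrank_le_two_mul_finrank_of_orthogonal_le {K V : Type*} [Field K] [AddCommGroup V]
    [Module K V] [FiniteDimensional K V] {B : LinearMap.BilinForm K V} (hB : B.Nondegenerate)
    {W : Submodule K V} (hW : B.orthogonal W ≤ B.orthogonal (B.orthogonal W)) :
    finrank K V ≤ 2 * finrank K W := by
  have h₁ := finrank_orthogonal hB W
  have h₂ := finrank_orthogonal hB (B.orthogonal W)
  have h₃ := Submodule.finrank_mono hW
  have h₄ := Submodule.finrank_le W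
  omega

theorem apply_self_eq_zero_of_skew {V : Type*} [AddCommGroup V] [Module ℝ V]
    {g : LinearMap.BilinForm ℝ V} {J : V →ₗ[ℝ] V} (hsymm : ∀ x y, g x y = g y x)
    (hskew : ∀ x y, g (J x) y + g x (J y) = 0) (x : V) : g (J x) x = 0 := by
  have := hskew x x
  rw [hsymm x] at this
  linarith

end LinearMap.BilinForm

section

variable {V : Type*} [AddCommGroup V] [Module ℝ V]

theorem linearIndependent_pair_of_apply_apply_eq_neg {J : V →ₗ[ℝ] V} (hJ : ∀ x, J (J x) = -x)
    {ξ : V} (hξ : ξ ≠ 0) : LinearIndependent ℝ ![ξ, J ξ] := by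
  refine LinearIndependent.pair_iff.2 fun s t hst => ?_
  have hJst : s • J ξ - t • ξ = 0 := by
    simpa [hJ, sub_eq_add_neg] using congrArg J hst
  have : (s * s + t * t) • ξ = 0 := by
    linear_combination (norm := module) s • hst - t • hJst
  have hst0 : s * s + t * t = 0 := (smul_eq_zero.1 this).resolve_right hξ
  constructor <;> nlinarith

/-- The paper's `(ε₁, ε₂, ε₃)` is `(-1, ε, ε)`: quaternionic for `ε = -1`, paraquaternionic for
`ε = 1`. -/
structure IsEpsQuaternionicHermitian (g : LinearMap.BilinForm ℝ V) (J₁ J₂ J₃ : V →ₗ[ℝ] V)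
    (ε : ℝ) : Prop where
  symm : ∀ x y, g x y = g y x
  separating : ∀ x, (∀ y, g x y = 0) → x = 0
  eps_mul_self : ε * ε = 1
  J₁_J₁ : ∀ x, J₁ (J₁ x) = -x
  J₂_J₂ : ∀ x, J₂ (J₂ x) = ε • x
  J₃_J₃ : ∀ x, J₃ (J₃ x) = ε • x
  J₁_J₂ : ∀ x, J₁ (J₂ x) = J₃ x
  skew₁ : ∀ x y, g (J₁ x) y + g x (J₁ y) = 0
  skew₂ : ∀ x y, g (J₂ x) y + g x (J₂ y) = 0
  skew₃ : ∀ x y, g (J₃ x) y + g x (J₃ y) = 0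

def quaternionicLine (J₁ J₂ J₃ : V →ₗ[ℝ] V) (ξ : V) : Submodule ℝ V :=
  Submodule.span ℝ (Set.range ![ξ, J₁ ξ, J₂ ξ, J₃ ξ])

def quaternionicTerm (g : LinearMap.BilinForm ℝ V) (J : V →ₗ[ℝ] V) (X Y Z W : V) : ℝ :=
  g (J X) Z * g (J Y) W - g (J Y) Z * g (J X) W + 2 * g X (J Y) * g Z (J W)

def epsQuaternionicCurvature (g : LinearMap.BilinForm ℝ V) (J₁ J₂ J₃ : V →ₗ[ℝ] V) (ε : ℝ)
    (X Y Z W : V) : ℝ :=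
  g X Z * g Y W - g Y Z * g X W
    - (-1 * quaternionicTerm g J₁ X Y Z W + ε * quaternionicTerm g J₂ X Y Z W
      + ε * quaternionicTerm g J₃ X Y Z W)

theorem curvature_eq_zero_of_mem_orthogonal {g : LinearMap.BilinForm ℝ V}
    {J₁ J₂ J₃ : V →ₗ[ℝ] V} {ξ : V} {R : V → V → V → V → ℝ} {ν : ℝ}
    (hspan : ∀ X Y : V, ∃ a b c d : ℝ, ∀ W : V,
      ν * R X Y ξ W = g (a • ξ + b • J₁ ξ + c • J₂ ξ + d • J₃ ξ) W)
    (hν : ν ≠ 0) {W : V} (hW : W ∈ g.orthogonal (quaternionicLine J₁ J₂ J₃ ξ)) (X Y : V) :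
    R X Y ξ W = 0 := by
  obtain ⟨a, b, c, d, h⟩ := hspan X Y
  have hmem : a • ξ + b • J₁ ξ + c • J₂ ξ + d • J₃ ξ ∈ quaternionicLine J₁ J₂ J₃ ξ :=
    (Submodule.mem_span_range_iff_exists_fun ℝ).2 ⟨![a, b, c, d], by simp [Fin.sum_univ_four]⟩
  have := h W
  rw [hW _ hmem] at this
  exact (mul_eq_zero.1 this).resolve_left hν

namespace IsEpsQuaternionicHermitian

variable {g : LinearMap.BilinForm ℝ V} {J₁ J₂ J₃ : V →ₗ[ℝ] V} {ε : ℝ}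

theorem J₁_J₃ (h : IsEpsQuaternionicHermitian g J₁ J₂ J₃ ε) (x : V) : J₁ (J₃ x) = -J₂ x := by
  rw [← h.J₁_J₂, h.J₁_J₁]

theorem J₂_J₁ (h : IsEpsQuaternionicHermitian g J₁ J₂ J₃ ε) (x : V) : J₂ (J₁ x) = -J₃ x := by
  have h₁ (y : V) : J₂ (J₁ (J₂ y)) = -(ε • J₁ y) := by
    rw [← neg_eq_iff_eq_neg, ← h.J₁_J₁ (J₂ (J₁ (J₂ y))), h.J₁_J₂, h.J₁_J₂, h.J₃_J₃, map_smul]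
  have h₂ : ε • J₂ (J₁ x) = ε • -J₃ x := by
    rw [← map_smul, ← map_smul, ← h.J₂_J₂, h₁, h.J₁_J₂, smul_neg]
  have hε : ε ≠ 0 := left_ne_zero_of_mul_eq_one h.eps_mul_self
  exact smul_right_injective V hε h₂

theorem J₃_J₁ (h : IsEpsQuaternionicHermitian g J₁ J₂ J₃ ε) (x : V) : J₃ (J₁ x) = J₂ x := by
  rw [← h.J₁_J₂, h.J₂_J₁, map_neg, h.J₁_J₃, neg_neg]

theorem apply_J₁ (h : IsEpsQuaternionicHermitian g J₁ J₂ J₃ ε) (x y : V) :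
    g x (J₁ y) = -g (J₁ x) y :=
  eq_neg_of_add_eq_zero_right (h.skew₁ x y)

theorem apply_J₂ (h : IsEpsQuaternionicHermitian g J₁ J₂ J₃ ε) (x y : V) :
    g x (J₂ y) = -g (J₂ x) y :=
  eq_neg_of_add_eq_zero_right (h.skew₂ x y)

theorem apply_J₃ (h : IsEpsQuaternionicHermitian g J₁ J₂ J₃ ε) (x y : V) :
    g x (J₃ y) = -g (J₃ x) y :=
  eq_neg_of_add_eq_zero_right (h.skew₃ x y)

theorem nondegenerate (h : IsEpsQuaternionicHermitian g J₁ J₂ J₃ ε) : g.Nondegenerate :=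
  ⟨h.separating, fun y hy => h.separating y fun x => (h.symm y x).trans (hy x)⟩

theorem mem_orthogonal_quaternionicLine_iff (h : IsEpsQuaternionicHermitian g J₁ J₂ J₃ ε)
    {ξ W : V} : W ∈ g.orthogonal (quaternionicLine J₁ J₂ J₃ ξ) ↔
      g W ξ = 0 ∧ g (J₁ W) ξ = 0 ∧ g (J₂ W) ξ = 0 ∧ g (J₃ W) ξ = 0 := by
  simp only [quaternionicLine, LinearMap.BilinForm.mem_orthogonal_span_iff,
    Set.forall_mem_range, Fin.forall_fin_succ, IsEmpty.forall_iff]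
  simp [h.symm _ W, h.apply_J₁ W, h.apply_J₂ W, h.apply_J₃ W]

theorem self_mem_orthogonal_quaternionicLine (h : IsEpsQuaternionicHermitian g J₁ J₂ J₃ ε)
    {ξ : V} (hnull : g ξ ξ = 0) : ξ ∈ g.orthogonal (quaternionicLine J₁ J₂ J₃ ξ) :=
  h.mem_orthogonal_quaternionicLine_iff.2 ⟨hnull,
    g.apply_self_eq_zero_of_skew h.symm h.skew₁ ξ,
    g.apply_self_eq_zero_of_skew h.symm h.skew₂ ξ,
    g.apply_self_eq_zero_of_skew h.symm h.skew₃ ξ⟩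

theorem J₁_mem_orthogonal_quaternionicLine (h : IsEpsQuaternionicHermitian g J₁ J₂ J₃ ε)
    {ξ W : V} (hW : W ∈ g.orthogonal (quaternionicLine J₁ J₂ J₃ ξ)) :
    J₁ W ∈ g.orthogonal (quaternionicLine J₁ J₂ J₃ ξ) := by
  obtain ⟨h₀, h₁, h₂, h₃⟩ := h.mem_orthogonal_quaternionicLine_iff.1 hW
  exact h.mem_orthogonal_quaternionicLine_iff.2
    ⟨h₁, by simp [h.J₁_J₁, h₀], by simp [h.J₂_J₁, h₃], by simp [h.J₃_J₁, h₂]⟩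

theorem curvature_apply_J₁_self (h : IsEpsQuaternionicHermitian g J₁ J₂ J₃ ε) {ξ : V}
    (hnull : g ξ ξ = 0) (X Y : V) :
    epsQuaternionicCurvature g J₁ J₂ J₃ ε X Y ξ (J₁ ξ) = -2 * g X (g (J₁ Y) ξ • ξ + g Y ξ • J₁ ξ
      + (ε * g (J₃ Y) ξ) • J₂ ξ - (ε * g (J₂ Y) ξ) • J₃ ξ) := by
  obtain ⟨-, -, h₂, h₃⟩ :=
    h.mem_orthogonal_quaternionicLine_iff.1 (h.self_mem_orthogonal_quaternionicLine hnull)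
  simp only [epsQuaternionicCurvature, quaternionicTerm, map_add, map_sub, map_smul, map_neg,
    smul_eq_mul, h.apply_J₁, h.apply_J₂, h.apply_J₃, h.J₁_J₁, h.J₁_J₂, h.J₁_J₃, h.J₂_J₁,
    h.J₃_J₁, LinearMap.neg_apply, hnull, h₂, h₃]
  ring

theorem curvature_apply_of_mem_orthogonal (h : IsEpsQuaternionicHermitian g J₁ J₂ J₃ ε)
    {ξ X W : V} (hX : X ∈ g.orthogonal (quaternionicLine J₁ J₂ J₃ ξ))
    (hW : W ∈ g.orthogonal (quaternionicLine J₁ J₂ J₃ ξ)) (Y : V) :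
    epsQuaternionicCurvature g J₁ J₂ J₃ ε X Y ξ W = -g Y (g X W • ξ - g (J₁ X) W • J₁ ξ
      + (ε * g (J₂ X) W) • J₂ ξ + (ε * g (J₃ X) W) • J₃ ξ) := by
  obtain ⟨x₀, x₁, x₂, x₃⟩ := h.mem_orthogonal_quaternionicLine_iff.1 hX
  have w₁ : g (J₁ ξ) W = 0 := hW _ (Submodule.subset_span ⟨1, rfl⟩)
  have w₂ : g (J₂ ξ) W = 0 := hW _ (Submodule.subset_span ⟨2, rfl⟩)
  have w₃ : g (J₃ ξ) W = 0 := hW _ (Submodule.subset_span ⟨3, rfl⟩)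
  simp only [epsQuaternionicCurvature, quaternionicTerm, map_add, map_sub, map_smul,
    smul_eq_mul, h.apply_J₁, h.apply_J₂, h.apply_J₃, x₀, x₁, x₂, x₃, w₁, w₂, w₃]
  ring

theorem frame_combination_eq_zero (h : IsEpsQuaternionicHermitian g J₁ J₂ J₃ ε) {ξ : V}
    (hnull : g ξ ξ = 0)
    (hR : ∀ X Y W, W ∈ g.orthogonal (quaternionicLine J₁ J₂ J₃ ξ) →
      epsQuaternionicCurvature g J₁ J₂ J₃ ε X Y ξ W = 0) (Y : V) :
    g (J₁ Y) ξ • ξ + g Y ξ • J₁ ξ + (ε * g (J₃ Y) ξ) • J₂ ξ - (ε * g (J₂ Y) ξ) • J₃ ξ = 0 := by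
  refine h.separating _ fun X => ?_
  have := hR X Y (J₁ ξ)
    (h.J₁_mem_orthogonal_quaternionicLine (h.self_mem_orthogonal_quaternionicLine hnull))
  rw [h.curvature_apply_J₁_self hnull] at this
  rw [h.symm]
  linarith

theorem orthogonal_quaternionicLine_le_orthogonal (h : IsEpsQuaternionicHermitian g J₁ J₂ J₃ ε)
    {ξ : V} (hξ : ξ ≠ 0)
    (hR : ∀ X Y W, W ∈ g.orthogonal (quaternionicLine J₁ J₂ J₃ ξ) →
      epsQuaternionicCurvature g J₁ J₂ J₃ ε X Y ξ W = 0) :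
    g.orthogonal (quaternionicLine J₁ J₂ J₃ ξ) ≤
      g.orthogonal (g.orthogonal (quaternionicLine J₁ J₂ J₃ ξ)) := by
  intro W hW X hX
  have hE {X W : V} (hX : X ∈ g.orthogonal (quaternionicLine J₁ J₂ J₃ ξ))
      (hW : W ∈ g.orthogonal (quaternionicLine J₁ J₂ J₃ ξ)) :
      g X W • ξ - g (J₁ X) W • J₁ ξ + (ε * g (J₂ X) W) • J₂ ξ + (ε * g (J₃ X) W) • J₃ ξ = 0 :=
    h.separating _ fun Y => by
      rw [h.symm, ← neg_eq_zero, ← h.curvature_apply_of_mem_orthogonal hX hW]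
      exact hR X Y W hW
  have e₁ := hE (h.J₁_mem_orthogonal_quaternionicLine hX) hW
  have e₂ := hE hX (h.J₁_mem_orthogonal_quaternionicLine hW)
  simp only [h.J₁_J₁, h.J₂_J₁, h.J₃_J₁, h.apply_J₁, h.J₁_J₂, h.J₁_J₃, map_neg,
    LinearMap.neg_apply, neg_neg] at e₁ e₂
  -- the `J₂ξ`, `J₃ξ` components cancel in the difference of the identities for `(J₁X, W)` and
  -- `(X, J₁W)`, leaving a relation between `ξ` and `J₁ξ`
  have : g (J₁ X) W • ξ + g X W • J₁ ξ = 0 := by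
    linear_combination (norm := module) (2 : ℝ)⁻¹ • (e₁ - e₂)
  exact (LinearIndependent.pair_iff.1 (linearIndependent_pair_of_apply_apply_eq_neg h.J₁_J₁ hξ)
    _ _ this).2

theorem linearIndependent_frame [FiniteDimensional ℝ V]
    (h : IsEpsQuaternionicHermitian g J₁ J₂ J₃ ε) (hV : 8 ≤ finrank ℝ V) {ξ : V} (hξ : ξ ≠ 0)
    (hR : ∀ X Y W, W ∈ g.orthogonal (quaternionicLine J₁ J₂ J₃ ξ) →
      epsQuaternionicCurvature g J₁ J₂ J₃ ε X Y ξ W = 0) :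
    LinearIndependent ℝ ![ξ, J₁ ξ, J₂ ξ, J₃ ξ] := by
  have := g.finrank_le_two_mul_finrank_of_orthogonal_le h.nondegenerate
    (h.orthogonal_quaternionicLine_le_orthogonal hξ hR)
  rw [linearIndependent_iff_card_le_finrank_span, Fintype.card_fin]
  exact (show 4 ≤ finrank ℝ (quaternionicLine J₁ J₂ J₃ ξ) by omega)

theorem not_linearIndependent_frame (h : IsEpsQuaternionicHermitian g J₁ J₂ J₃ ε) {ξ : V}
    (hnull : g ξ ξ = 0)
    (hR : ∀ X Y W, W ∈ g.orthogonal (quaternionicLine J₁ J₂ J₃ ξ) →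
      epsQuaternionicCurvature g J₁ J₂ J₃ ε X Y ξ W = 0) :
    ¬LinearIndependent ℝ ![ξ, J₁ ξ, J₂ ξ, J₃ ξ] := by
  intro hind
  refine hind.ne_zero 0 (h.separating ξ fun Y => ?_)
  have hcoeff := Fintype.linearIndependent_iff.1 hind
    ![g (J₁ Y) ξ, g Y ξ, ε * g (J₃ Y) ξ, -(ε * g (J₂ Y) ξ)]
    (by simpa [Fin.sum_univ_four, sub_eq_add_neg] using h.frame_combination_eq_zero hnull hR Y) 1
  rw [h.symm]
  simpa using hcoeff

theorem eq_zero_of_curvature_orthogonal [FiniteDimensional ℝ V]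
    (h : IsEpsQuaternionicHermitian g J₁ J₂ J₃ ε) (hV : 8 ≤ finrank ℝ V) {ξ : V}
    (hnull : g ξ ξ = 0)
    (hR : ∀ X Y W, W ∈ g.orthogonal (quaternionicLine J₁ J₂ J₃ ξ) →
      epsQuaternionicCurvature g J₁ J₂ J₃ ε X Y ξ W = 0) :
    ξ = 0 := by
  by_contra hξ
  exact h.not_linearIndependent_frame hnull hR (h.linearIndependent_frame hV hξ hR)

end IsEpsQuaternionicHermitian

end

/-- If `R = ν R₀` with `R₀` the quaternionic space-form curvature
tensor (22), and `R(X,Y)ξ ∈ span{ξ, J₁ξ, J₂ξ, J₃ξ}` for all `X, Y`, where `ξ` is a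
nonzero null vector, then `ν = 0` (hence `R = 0`).  The condition
`ν R₀(X,Y)ξ ∈ span{ξ, Jₐξ}` is expressed, via the nondegenerate pairing `g`, as:
the functional `W ↦ ν R₀(X,Y,ξ,W)` equals `g(aξ + bJ₁ξ + cJ₂ξ + dJ₃ξ, ·)`. -/
theorem stmt19 (V : Type*) [AddCommGroup V] [Module ℝ V] [FiniteDimensional ℝ V]
    (n : ℕ) (hn : 2 ≤ n) (hdim : Module.finrank ℝ V = 4 * n)
    (ε₁ ε₂ ε₃ : ℝ)
    (hε : (ε₁ = -1 ∧ ε₂ = -1 ∧ ε₃ = -1) ∨ (ε₁ = -1 ∧ ε₂ = 1 ∧ ε₃ = 1))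
    (g : LinearMap.BilinForm ℝ V)
    (hsymm : ∀ x y : V, g x y = g y x)
    (hnd : ∀ x : V, (∀ y : V, g x y = 0) → x = 0)
    (J₁ J₂ J₃ : V →ₗ[ℝ] V)
    (hJ1 : ∀ x : V, J₁ (J₁ x) = ε₁ • x)
    (hJ2 : ∀ x : V, J₂ (J₂ x) = ε₂ • x)
    (hJ3 : ∀ x : V, J₃ (J₃ x) = ε₃ • x)
    (hJ12 : ∀ x : V, J₁ (J₂ x) = J₃ x)
    (hskew1 : ∀ x y : V, g (J₁ x) y + g x (J₁ y) = 0)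
    (hskew2 : ∀ x y : V, g (J₂ x) y + g x (J₂ y) = 0)
    (hskew3 : ∀ x y : V, g (J₃ x) y + g x (J₃ y) = 0)
    (ξ : V) (hξ : ξ ≠ 0) (hnull : g ξ ξ = 0)
    (R₀form : V → V → V → V → ℝ)
    (hR₀ : ∀ X Y Z W : V, R₀form X Y Z W =
      g X Z * g Y W - g Y Z * g X W
      - (ε₁ * (g (J₁ X) Z * g (J₁ Y) W - g (J₁ Y) Z * g (J₁ X) W
            + 2 * g X (J₁ Y) * g Z (J₁ W))
        + ε₂ * (g (J₂ X) Z * g (J₂ Y) W - g (J₂ Y) Z * g (J₂ X) W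
            + 2 * g X (J₂ Y) * g Z (J₂ W))
        + ε₃ * (g (J₃ X) Z * g (J₃ Y) W - g (J₃ Y) Z * g (J₃ X) W
            + 2 * g X (J₃ Y) * g Z (J₃ W))))
    (ν : ℝ)
    (hspan : ∀ X Y : V, ∃ a b c d : ℝ, ∀ W : V,
      ν * R₀form X Y ξ W = g (a • ξ + b • J₁ ξ + c • J₂ ξ + d • J₃ ξ) W) :
    ν = 0 := by
  by_contra hν
  obtain rfl : ε₁ = -1 := by rcases hε with h | h <;> exact h.1
  obtain rfl : ε₂ = ε₃ := by rcases hε with h | h <;> rw [h.2.1, h.2.2]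
  have hε₂ : ε₂ * ε₂ = 1 := by rcases hε with h | h <;> norm_num [h.2.1]
  have hV : IsEpsQuaternionicHermitian g J₁ J₂ J₃ ε₂ :=
    ⟨hsymm, hnd, hε₂, fun x => by rw [hJ1, neg_one_smul], hJ2, hJ3, hJ12, hskew1, hskew2, hskew3⟩
  obtain rfl : R₀form = epsQuaternionicCurvature g J₁ J₂ J₃ ε₂ := by
    funext X Y Z W
    exact hR₀ X Y Z W
  exact hξ (hV.eq_zero_of_curvature_orthogonal (by omega) hnull fun X Y W hW =>
    curvature_eq_zero_of_mem_orthogonal hspan hν hW X Y)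
end
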